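/- arXiv:2209.14888 — 3 statements merged into one kernel-verified Lean document; each statement's English description precedes it below -/
import Mathlib

section
/- Let $X, Y$ be compact metric spaces, $\mu \in \mathcal{P}(X)$, $c : X \times Y \to \mathbb{R}$ continuous, and $\mathcal{F} : \mathcal{P}(Y) \to \mathbb{R}$ convex with first variation $F(\nu, y)$, meaning that for all $\nu, \rho \in \mathcal{P}(Y)$, $\lim_{t \to 0^+} \frac{\mathcal{F}(\nu + t(\rho - \nu)) - \mathcal{F}(\nu)}{t} = \int_Y F(\nu, y)\, d(\rho - \nu)(y)$. If $\nu^*$ minimizes $\nu \mapsto \mathcal{T}_c(\mu,\nu) + \mathcal{F}(\nu)$ over $\mathcal{P}(Y)$ and $\gamma^*$ is an optimal transport plan between $\mu$ and $\nu^*$ for cost $c$, then $\gamma^*$ is a Cournot-Nash equilibrium for the cost $\Phi(x,y,\nu) = c(x,y) + F(\nu,y)$, i.e., $\gamma^*(\{(x,y) : \Phi(x,y,\nu^*) = \min_{z \in Y} \Phi(x,z,\nu^*)\}) = 1$. -/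
/-!
Perturb `ν*` along the segment `ν_t = (1 - t) ν* + t ρ` towards an arbitrary `ρ`. Mixing `γ*`
with any coupling `γ` of `μ` and `ρ` gives `𝒯_c(μ, ν_t) ≤ (1 - t) ∫ c dγ* + t ∫ c dγ`, so
minimality of `ν*` and the first variation of `𝓕` yield
`∫ c dγ* + ∫ F(ν*) dν* ≤ ∫ c dγ + ∫ F(ν*) dρ`.
Taking for `γ` the graph of a measurable `ε`-minimiser of `Φ(x, ·, ν*)` bounds the left side by
`∫ min_z Φ(x, z, ν*) dμ(x)`. Thus `Φ(x, y, ν*)` and `min_z Φ(x, z, ν*)` have the same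
`γ*`-integral while the first dominates the second, so they agree `γ*`-almost everywhere.
-/

open MeasureTheory Set Filter
open scoped Topology

theorem Continuous.integrable_of_compactSpace {α E : Type*} [TopologicalSpace α] [CompactSpace α]
    [MeasurableSpace α] [OpensMeasurableSpace α] [NormedAddCommGroup E] {μ : Measure α}
    [IsFiniteMeasure μ] {f : α → E} (hf : Continuous f) : Integrable f μ :=
  hf.integrable_of_hasCompactSupport (HasCompactSupport.of_compactSpace f)

theorem continuous_iInf_of_compactSpace {α β : Type*} [TopologicalSpace α] [TopologicalSpace β]
    [CompactSpace β] {f : α → β → ℝ} (hf : Continuous fun p : α × β => f p.1 p.2) :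
    Continuous fun x => ⨅ y, f x y := by
  simpa only [image_univ, sInf_range] using isCompact_univ.continuous_sInf (f := f) hf

theorem measure_setOf_eq_eq_one_of_integral_le {α : Type*} [MeasurableSpace α] {μ : Measure α}
    [IsProbabilityMeasure μ] {f g : α → ℝ} (hf : Integrable f μ) (hg : Integrable g μ)
    (hgf : ∀ x, g x ≤ f x) (hint : ∫ x, f x ∂μ ≤ ∫ x, g x ∂μ) : μ {x | f x = g x} = 1 := by
  have hae : g =ᵐ[μ] f := (integral_eq_iff_of_ae_le hg hf (ae_of_all _ hgf)).1
    (le_antisymm (integral_mono hg hf hgf) hint)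
  exact (measure_congr (ae_eq_univ.2 (ae_iff.1 (hae.mono fun _ hx => hx.symm)))).trans
    measure_univ

theorem exists_measurable_lt_iInf_add {α β : Type*} [MeasurableSpace α] [TopologicalSpace β]
    [TopologicalSpace.SeparableSpace β] [Nonempty β] [MeasurableSpace β] {g : α → β → ℝ}
    (hg : ∀ x, Continuous (g x)) (hgm : ∀ y, Measurable fun x => g x y)
    (hinf : Measurable fun x => ⨅ y, g x y) {ε : ℝ} (hε : 0 < ε) :
    ∃ T : α → β, Measurable T ∧ ∀ x, g x (T x) < (⨅ y, g x y) + ε := by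
  classical
  obtain ⟨u, hu⟩ := TopologicalSpace.exists_dense_seq β
  have hex : ∀ x, ∃ n, g x (u n) < (⨅ y, g x y) + ε := fun x =>
    hu.exists_mem_open (isOpen_lt (hg x) continuous_const)
      (exists_lt_of_ciInf_lt (lt_add_of_pos_right _ hε))
  exact ⟨fun x => u (Nat.find (hex x)), measurable_from_top.comp
    (measurable_find hex fun n => measurableSet_lt (hgm _) (hinf.add_const ε)),
    fun x => Nat.find_spec (hex x)⟩

section Mixture

variable {α β : Type*} [MeasurableSpace α] [MeasurableSpace β]

noncomputable def mixture (ν ρ : Measure α) (t : ℝ) : Measure α :=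
  ENNReal.ofReal (1 - t) • ν + ENNReal.ofReal t • ρ

variable {t : ℝ}

theorem mixture_self (ν : Measure α) (ht0 : 0 ≤ t) (ht1 : t ≤ 1) : mixture ν ν t = ν := by
  rw [mixture, ← add_smul, ← ENNReal.ofReal_add (by linarith) ht0]
  norm_num

theorem isProbabilityMeasure_mixture {ν ρ : Measure α} [IsProbabilityMeasure ν]
    [IsProbabilityMeasure ρ] (ht0 : 0 ≤ t) (ht1 : t ≤ 1) :
    IsProbabilityMeasure (mixture ν ρ t) := by
  constructor
  simp only [mixture, Measure.add_apply, Measure.smul_apply, smul_eq_mul, measure_univ, mul_one]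
  rw [← ENNReal.ofReal_add (by linarith) ht0]
  norm_num

theorem map_mixture (ν ρ : Measure α) (t : ℝ) {f : α → β} (hf : Measurable f) :
    (mixture ν ρ t).map f = mixture (ν.map f) (ρ.map f) t := by
  simp only [mixture, Measure.map_add _ _ hf, Measure.map_smul]

theorem integral_mixture {ν ρ : Measure α} {f : α → ℝ} (hν : Integrable f ν)
    (hρ : Integrable f ρ) (ht0 : 0 ≤ t) (ht1 : t ≤ 1) :
    ∫ x, f x ∂mixture ν ρ t = (1 - t) * ∫ x, f x ∂ν + t * ∫ x, f x ∂ρ := by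
  rw [mixture, integral_add_measure (hν.smul_measure ENNReal.ofReal_ne_top)
      (hρ.smul_measure ENNReal.ofReal_ne_top), integral_smul_measure, integral_smul_measure,
    ENNReal.toReal_ofReal (by linarith), ENNReal.toReal_ofReal ht0, smul_eq_mul, smul_eq_mul]

end Mixture

section Transport

variable {X Y : Type*} [MeasurableSpace X] [MeasurableSpace Y]

/-- `𝒯_c(μ, ν)` is the infimum of this set. -/
def transportCosts (μ : Measure X) (c : X → Y → ℝ) (ν : Measure Y) : Set ℝ :=
  {r | ∃ γ : Measure (X × Y), γ.map Prod.fst = μ ∧ γ.map Prod.snd = ν ∧ r = ∫ p, c p.1 p.2 ∂γ}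

theorem isProbabilityMeasure_of_map_fst_eq {μ : Measure X} [IsProbabilityMeasure μ]
    {γ : Measure (X × Y)} (h : γ.map Prod.fst = μ) : IsProbabilityMeasure γ :=
  have : IsProbabilityMeasure (γ.map Prod.fst) := h ▸ ‹_›
  Measure.isProbabilityMeasure_of_map Prod.fst

variable [MetricSpace X] [CompactSpace X] [BorelSpace X] [MetricSpace Y] [CompactSpace Y]
  [BorelSpace Y] {μ : Measure X} [IsProbabilityMeasure μ] {c : X → Y → ℝ}

theorem bddBelow_transportCosts (hc : Continuous fun p : X × Y => c p.1 p.2) (ν : Measure Y) :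
    BddBelow (transportCosts μ c ν) := by
  obtain ⟨m, hm⟩ := (isCompact_range hc).bddBelow
  refine ⟨m, ?_⟩
  rintro r ⟨γ, hγ1, -, rfl⟩
  have := isProbabilityMeasure_of_map_fst_eq hγ1
  calc m = ∫ _, m ∂γ := by simp
    _ ≤ ∫ p, c p.1 p.2 ∂γ := integral_mono (integrable_const m) hc.integrable_of_compactSpace
        fun p => hm (mem_range_self p)

theorem sInf_transportCosts_mixture_le (hc : Continuous fun p : X × Y => c p.1 p.2)
    {ν ρ : Measure Y} {γ γ' : Measure (X × Y)} (hγ1 : γ.map Prod.fst = μ)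
    (hγ2 : γ.map Prod.snd = ν) (hγ'1 : γ'.map Prod.fst = μ) (hγ'2 : γ'.map Prod.snd = ρ)
    {t : ℝ} (ht0 : 0 ≤ t) (ht1 : t ≤ 1) :
    sInf (transportCosts μ c (mixture ν ρ t)) ≤
      (1 - t) * ∫ p, c p.1 p.2 ∂γ + t * ∫ p, c p.1 p.2 ∂γ' := by
  have := isProbabilityMeasure_of_map_fst_eq hγ1
  have := isProbabilityMeasure_of_map_fst_eq hγ'1
  refine csInf_le (bddBelow_transportCosts hc _) ⟨mixture γ γ' t, ?_, ?_, ?_⟩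
  · rw [map_mixture _ _ _ measurable_fst, hγ1, hγ'1, mixture_self μ ht0 ht1]
  · rw [map_mixture _ _ _ measurable_snd, hγ2, hγ'2]
  · rw [integral_mixture hc.integrable_of_compactSpace hc.integrable_of_compactSpace ht0 ht1]

theorem integral_cost_add_integral_le_of_isMin (hc : Continuous fun p : X × Y => c p.1 p.2)
    (𝓕 : Measure Y → ℝ) {f : Y → ℝ} {νs ρ : Measure Y} [IsProbabilityMeasure νs]
    [IsProbabilityMeasure ρ]
    (hFV : Tendsto (fun t : ℝ => (𝓕 (mixture νs ρ t) - 𝓕 νs) / t) (𝓝[>] 0)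
      (𝓝 (∫ y, f y ∂ρ - ∫ y, f y ∂νs)))
    (hmin : ∀ ν : Measure Y, IsProbabilityMeasure ν →
      sInf (transportCosts μ c νs) + 𝓕 νs ≤ sInf (transportCosts μ c ν) + 𝓕 ν)
    {γs γ : Measure (X × Y)} (hγs1 : γs.map Prod.fst = μ) (hγs2 : γs.map Prod.snd = νs)
    (hγsopt : ∫ p, c p.1 p.2 ∂γs = sInf (transportCosts μ c νs))
    (hγ1 : γ.map Prod.fst = μ) (hγ2 : γ.map Prod.snd = ρ) :
    ∫ p, c p.1 p.2 ∂γs + ∫ y, f y ∂νs ≤ ∫ p, c p.1 p.2 ∂γ + ∫ y, f y ∂ρ := by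
  suffices ∫ p, c p.1 p.2 ∂γs - ∫ p, c p.1 p.2 ∂γ ≤ ∫ y, f y ∂ρ - ∫ y, f y ∂νs by linarith
  refine ge_of_tendsto hFV ?_
  filter_upwards [Ioc_mem_nhdsGT one_pos] with t ⟨ht0, ht1⟩
  have hcost := sInf_transportCosts_mixture_le hc hγs1 hγs2 hγ1 hγ2 ht0.le ht1
  have hopt := hmin (mixture νs ρ t) (isProbabilityMeasure_mixture ht0.le ht1)
  rw [le_div_iff₀ ht0]
  linarith

theorem le_integral_iInf_of_forall_coupling (hc : Continuous fun p : X × Y => c p.1 p.2)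
    [Nonempty Y] {f : Y → ℝ} (hf : Continuous f) {A : ℝ}
    (hA : ∀ ρ : Measure Y, IsProbabilityMeasure ρ → ∀ γ : Measure (X × Y),
      γ.map Prod.fst = μ → γ.map Prod.snd = ρ → A ≤ ∫ p, c p.1 p.2 ∂γ + ∫ y, f y ∂ρ) :
    A ≤ ∫ x, ⨅ y, (c x y + f y) ∂μ := by
  have hG : Continuous fun p : X × Y => c p.1 p.2 + f p.2 := hc.add hf.snd'
  have hφ : Continuous fun x => ⨅ y, (c x y + f y) := continuous_iInf_of_compactSpace hG
  refine le_of_forall_pos_le_add fun ε hε => ?_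
  obtain ⟨T, hT, hTε⟩ := exists_measurable_lt_iInf_add
    (fun x => hG.comp (Continuous.prodMk_right x))
    (fun y => (hG.comp (continuous_id.prodMk continuous_const)).measurable) hφ.measurable hε
  have hgraph : Measurable fun x => (x, T x) := measurable_id.prodMk hT
  have hγ1 : (μ.map fun x => (x, T x)).map Prod.fst = μ := by
    rw [Measure.map_map measurable_fst hgraph]
    exact Measure.map_id
  have hγ2 : (μ.map fun x => (x, T x)).map Prod.snd = μ.map T := by
    rw [Measure.map_map measurable_snd hgraph]
    rfl
  have hGT : Integrable (fun x => c x (T x) + f (T x)) μ :=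
    (integrable_map_measure hG.aestronglyMeasurable hgraph.aemeasurable).1
      hG.integrable_of_compactSpace
  have hφint : Integrable (fun x => ⨅ y, (c x y + f y)) μ := hφ.integrable_of_compactSpace
  calc A ≤ ∫ p, c p.1 p.2 ∂(μ.map fun x => (x, T x)) + ∫ y, f y ∂(μ.map T) :=
        hA _ (Measure.isProbabilityMeasure_map hT.aemeasurable) _ hγ1 hγ2
    _ = ∫ p, (c p.1 p.2 + f p.2) ∂(μ.map fun x => (x, T x)) := by
        rw [← hγ2, integral_map measurable_snd.aemeasurable hf.aestronglyMeasurable,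
          integral_add hc.integrable_of_compactSpace
            hf.snd'.integrable_of_compactSpace]
    _ = ∫ x, (c x (T x) + f (T x)) ∂μ := integral_map hgraph.aemeasurable hG.aestronglyMeasurable
    _ ≤ ∫ x, ((⨅ y, (c x y + f y)) + ε) ∂μ :=
        integral_mono hGT (hφint.add (integrable_const ε)) fun x => (hTε x).le
    _ = ∫ x, ⨅ y, (c x y + f y) ∂μ + ε := by
        rw [integral_add hφint (integrable_const ε), integral_const]
        simp

end Transport

theorem stmt6_general {X Y : Type*}
    [MetricSpace X] [CompactSpace X] [MeasurableSpace X] [BorelSpace X]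
    [MetricSpace Y] [CompactSpace Y] [MeasurableSpace Y] [BorelSpace Y]
    (μ : Measure X) [IsProbabilityMeasure μ]
    (c : X → Y → ℝ) (hc : Continuous fun p : X × Y => c p.1 p.2)
    (𝓕 : Measure Y → ℝ) (F : Measure Y → Y → ℝ)
    (hFV : ∀ (ν ρ : Measure Y), IsProbabilityMeasure ν → IsProbabilityMeasure ρ →
      Tendsto (fun t : ℝ =>
          (𝓕 (ENNReal.ofReal (1 - t) • ν + ENNReal.ofReal t • ρ) - 𝓕 ν) / t)
        (𝓝[>] (0:ℝ))
        (𝓝 (∫ y, F ν y ∂ρ - ∫ y, F ν y ∂ν)))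
    (Tc : Measure Y → ℝ)
    (hTc : ∀ ν : Measure Y, Tc ν = sInf {r : ℝ | ∃ γ : Measure (X × Y),
        γ.map Prod.fst = μ ∧ γ.map Prod.snd = ν ∧ r = ∫ p, c p.1 p.2 ∂γ})
    (νs : Measure Y) [IsProbabilityMeasure νs]
    (hmin : ∀ ν : Measure Y, IsProbabilityMeasure ν → Tc νs + 𝓕 νs ≤ Tc ν + 𝓕 ν)
    (hFcont : Continuous (F νs))
    (γs : Measure (X × Y)) (hγ1 : γs.map Prod.fst = μ) (hγ2 : γs.map Prod.snd = νs)
    (hγopt : ∫ p, c p.1 p.2 ∂γs = Tc νs) :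
    γs {p : X × Y | c p.1 p.2 + F νs p.2 = ⨅ z : Y, (c p.1 z + F νs z)} = 1 := by
  have : Nonempty Y := nonempty_of_isProbabilityMeasure νs
  have := isProbabilityMeasure_of_map_fst_eq hγ1
  obtain rfl : Tc = fun ν => sInf (transportCosts μ c ν) := funext hTc
  have hG : Continuous fun p : X × Y => c p.1 p.2 + F νs p.2 := hc.add hFcont.snd'
  have hφ : Continuous fun x => ⨅ z, (c x z + F νs z) := continuous_iInf_of_compactSpace hG
  have hvalue : ∫ p, c p.1 p.2 ∂γs + ∫ y, F νs y ∂νs ≤ ∫ x, ⨅ z, (c x z + F νs z) ∂μ :=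
    le_integral_iInf_of_forall_coupling hc hFcont fun ρ _ _ hρ1 hρ2 =>
      integral_cost_add_integral_le_of_isMin hc 𝓕 (hFV νs ρ ‹_› ‹_›) hmin hγ1 hγ2 hγopt hρ1 hρ2
  refine measure_setOf_eq_eq_one_of_integral_le hG.integrable_of_compactSpace
    hφ.fst'.integrable_of_compactSpace
    (fun p => ciInf_le (isCompact_range (hG.comp (Continuous.prodMk_right p.1))).bddBelow p.2) ?_
  calc ∫ p, (c p.1 p.2 + F νs p.2) ∂γs = ∫ p, c p.1 p.2 ∂γs + ∫ y, F νs y ∂νs := by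
        rw [integral_add hc.integrable_of_compactSpace
            hFcont.snd'.integrable_of_compactSpace,
          ← integral_map measurable_snd.aemeasurable hFcont.aestronglyMeasurable, hγ2]
    _ ≤ ∫ x, ⨅ z, (c x z + F νs z) ∂μ := hvalue
    _ = ∫ p, ⨅ z, (c p.1 z + F νs z) ∂γs := by
        rw [← hγ1, integral_map measurable_fst.aemeasurable hφ.aestronglyMeasurable]

/-- Minimizers of `ν ↦ 𝒯_c(μ,ν) + 𝓕(ν)` give Cournot-Nash equilibria: if `ν*` minimizes
the variational problem and `γ*` is an optimal plan between `μ` and `ν*`, then `γ*` is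
concentrated on the set where `y` minimizes `z ↦ c(x,z) + F(ν*,z)`, where `F` is the first
variation of the convex functional `𝓕`. -/
theorem stmt6 {X Y : Type*}
    [MetricSpace X] [CompactSpace X] [MeasurableSpace X] [BorelSpace X]
    [MetricSpace Y] [CompactSpace Y] [MeasurableSpace Y] [BorelSpace Y] [Nonempty Y]
    (μ : Measure X) [IsProbabilityMeasure μ]
    (c : X → Y → ℝ) (hc : Continuous fun p : X × Y => c p.1 p.2)
    (𝓕 : Measure Y → ℝ) (F : Measure Y → Y → ℝ)
    (hconv : ∀ (ν ρ : Measure Y), IsProbabilityMeasure ν → IsProbabilityMeasure ρ →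
      ∀ t : ℝ, 0 ≤ t → t ≤ 1 →
        𝓕 (ENNReal.ofReal (1 - t) • ν + ENNReal.ofReal t • ρ) ≤ (1 - t) * 𝓕 ν + t * 𝓕 ρ)
    (hFV : ∀ (ν ρ : Measure Y), IsProbabilityMeasure ν → IsProbabilityMeasure ρ →
      Tendsto (fun t : ℝ =>
          (𝓕 (ENNReal.ofReal (1 - t) • ν + ENNReal.ofReal t • ρ) - 𝓕 ν) / t)
        (𝓝[>] (0:ℝ))
        (𝓝 (∫ y, F ν y ∂ρ - ∫ y, F ν y ∂ν)))
    (Tc : Measure Y → ℝ)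
    (hTc : ∀ ν : Measure Y, Tc ν = sInf {r : ℝ | ∃ γ : Measure (X × Y),
        γ.map Prod.fst = μ ∧ γ.map Prod.snd = ν ∧ r = ∫ p, c p.1 p.2 ∂γ})
    (νs : Measure Y) [IsProbabilityMeasure νs]
    (hmin : ∀ ν : Measure Y, IsProbabilityMeasure ν → Tc νs + 𝓕 νs ≤ Tc ν + 𝓕 ν)
    (hFcont : Continuous (F νs))
    (γs : Measure (X × Y)) (hγ1 : γs.map Prod.fst = μ) (hγ2 : γs.map Prod.snd = νs)
    (hγopt : ∫ p, c p.1 p.2 ∂γs = Tc νs) :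
    γs {p : X × Y | c p.1 p.2 + F νs p.2 = ⨅ z : Y, (c p.1 z + F νs z)} = 1 :=
  stmt6_general μ c hc 𝓕 F hFV Tc hTc νs hmin hFcont γs hγ1 hγ2 hγopt
end

section
/- Let $f : [0,\infty) \to \mathbb{R}$ be strictly convex, continuously differentiable on $(0,\infty)$, with superlinear growth at infinity and $\lim_{x \to 0^+} f'(x) = -\infty$. Then for any $C \in \mathbb{R}$ and any continuous $v : Y \to \mathbb{R}$ on compact $Y \subset \mathbb{R}$, the function $y \mapsto (f')^{-1}(C - v(y))$ is well-defined, positive, and continuous, and there exists a unique constant $C$ such that $\int_Y (f')^{-1}(C - v(y))\, dy = 1$. -/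
/-!
Strict convexity makes `f'` strictly increasing on `(0, ∞)`, and onto `ℝ` by assumption, so it
has a continuous strictly increasing inverse `g : ℝ → (0, ∞)`. The mass
`I(C) = ∫_Y g(C - v)` is then continuous and strictly increasing in `C`. Since `v` is bounded
on the compact set `Y`, taking `C = f'(t) + max v` (resp. `f'(t) + min v`) forces
`I(C) ≥ t |Y|` (resp. `≤ t |Y|`), so `I` takes every positive value, and exactly once.
-/

open MeasureTheory Set Filter Function
open scoped Topology

theorem StrictConvexOn.strictMonoOn_of_hasDerivAt {S : Set ℝ} {f f' : ℝ → ℝ}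
    (hf : StrictConvexOn ℝ S f) (hf' : ∀ x ∈ S, HasDerivAt f (f' x) x) :
    StrictMonoOn f' S := fun x hx y hy hxy =>
  (hf.lt_slope_of_hasDerivAt hx hy hxy (hf' x hx)).trans
    (hf.slope_lt_of_hasDerivAt hx hy hxy (hf' y hy))

theorem StrictMonoOn.exists_continuous_strictMono_inverse {α β : Type*}
    [LinearOrder α] [TopologicalSpace α] [OrderTopology α]
    [LinearOrder β] [TopologicalSpace β] [OrderTopology β]
    {φ : α → β} {s : Set α} [s.OrdConnected] (hφ : StrictMonoOn φ s)
    (hsurj : SurjOn φ s univ) :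
    ∃ g : β → α, Continuous g ∧ StrictMono g ∧ (∀ r, g r ∈ s ∧ φ (g r) = r) ∧
      LeftInvOn g φ s := by
  let e : s ≃o β := StrictMono.orderIsoOfSurjective (fun t : s => φ t)
    (fun a b hab => hφ a.2 b.2 hab)
    (fun r => by obtain ⟨t, ht, rfl⟩ := hsurj (mem_univ r); exact ⟨⟨t, ht⟩, rfl⟩)
  exact ⟨fun r => e.symm r, continuous_subtype_val.comp e.symm.continuous,
    fun a b hab => e.symm.strictMono hab, fun r => ⟨(e.symm r).2, e.apply_symm_apply r⟩,
    fun t ht => congrArg Subtype.val (e.symm_apply_apply ⟨t, ht⟩)⟩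

theorem MeasureTheory.setIntegral_pos_of_forall_pos {X : Type*} [MeasurableSpace X]
    {μ : Measure X} {s : Set X} {f : X → ℝ} (hs : MeasurableSet s) (hf : IntegrableOn f s μ)
    (hpos : ∀ x ∈ s, 0 < f x) (hμ : 0 < μ s) : 0 < ∫ x in s, f x ∂μ := by
  rw [setIntegral_pos_iff_support_of_nonneg_ae
    ((ae_restrict_mem hs).mono fun x hx => (hpos x hx).le) hf]
  have : support f ∩ s = s := inter_eq_right.2 fun x hx => (hpos x hx).ne'
  rwa [this]

section Normalization

variable {X : Type*} [TopologicalSpace X] [T2Space X] [MeasurableSpace X] [OpensMeasurableSpace X]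
  {μ : Measure X} [IsFiniteMeasureOnCompacts μ] {Y : Set X} {g : ℝ → ℝ} {v : X → ℝ}

theorem continuous_setIntegral_comp_sub (hg : Continuous g) (hY : IsCompact Y)
    (hv : ContinuousOn v Y) : Continuous fun C => ∫ y in Y, g (C - v y) ∂μ := by
  rw [continuous_iff_continuousAt]
  intro C₀
  have hF : ContinuousOn (fun p : ℝ × X => g (p.1 - v p.2)) (Icc (C₀ - 1) (C₀ + 1) ×ˢ Y) :=
    hg.comp_continuousOn (continuous_fst.continuousOn.sub
      (hv.comp continuous_snd.continuousOn fun p hp => hp.2))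
  obtain ⟨K, hK⟩ := (isCompact_Icc.prod hY).bddAbove_image hF.norm
  apply continuousAt_of_dominated (bound := fun _ => K)
  · exact Eventually.of_forall fun C =>
      (hg.comp_continuousOn (continuousOn_const.sub hv)).aestronglyMeasurable hY.measurableSet
  · filter_upwards [Icc_mem_nhds (sub_one_lt C₀) (lt_add_one C₀)] with C hC
    filter_upwards [ae_restrict_mem hY.measurableSet] with y hy
      using hK (mem_image_of_mem _ (mk_mem_prod hC hy))
  · exact integrableOn_const hY.measure_ne_top
  · exact Eventually.of_forall fun y => (hg.comp (continuous_sub_right (v y))).continuousAt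

theorem strictMono_setIntegral_comp_sub (hg : Continuous g) (hgm : StrictMono g)
    (hY : IsCompact Y) (hv : ContinuousOn v Y) (hμ : 0 < μ Y) :
    StrictMono fun C => ∫ y in Y, g (C - v y) ∂μ := by
  intro C C' hCC'
  have hint : ∀ C, IntegrableOn (fun y => g (C - v y)) Y μ := fun C =>
    (hg.comp_continuousOn (continuousOn_const.sub hv)).integrableOn_compact hY
  have hgap : 0 < ∫ y in Y, (g (C' - v y) - g (C - v y)) ∂μ :=
    setIntegral_pos_of_forall_pos hY.measurableSet ((hint C').sub (hint C))
      (fun y _ => sub_pos.2 (hgm (by linarith))) hμ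
  rw [integral_sub (hint C') (hint C)] at hgap
  simpa using hgap

theorem setIntegral_comp_sub_le (hg : Continuous g) (hgm : Monotone g) (hY : IsCompact Y)
    (hv : ContinuousOn v Y) {m : ℝ} (hm : ∀ y ∈ Y, m ≤ v y) (r : ℝ) :
    ∫ y in Y, g (r + m - v y) ∂μ ≤ μ.real Y * g r := by
  calc ∫ y in Y, g (r + m - v y) ∂μ ≤ ∫ _ in Y, g r ∂μ :=
        setIntegral_mono_on
          ((hg.comp_continuousOn (continuousOn_const.sub hv)).integrableOn_compact hY)
          (integrableOn_const hY.measure_ne_top) hY.measurableSet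
          (fun y hy => hgm (by linarith [hm y hy]))
    _ = μ.real Y * g r := by rw [setIntegral_const, smul_eq_mul]

theorem le_setIntegral_comp_sub (hg : Continuous g) (hgm : Monotone g) (hY : IsCompact Y)
    (hv : ContinuousOn v Y) {M : ℝ} (hM : ∀ y ∈ Y, v y ≤ M) (r : ℝ) :
    μ.real Y * g r ≤ ∫ y in Y, g (r + M - v y) ∂μ := by
  calc μ.real Y * g r = ∫ _ in Y, g r ∂μ := by rw [setIntegral_const, smul_eq_mul]
    _ ≤ ∫ y in Y, g (r + M - v y) ∂μ :=
        setIntegral_mono_on (integrableOn_const hY.measure_ne_top)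
          ((hg.comp_continuousOn (continuousOn_const.sub hv)).integrableOn_compact hY)
          hY.measurableSet (fun y hy => hgm (by linarith [hM y hy]))

theorem existsUnique_setIntegral_comp_sub_eq (hg : Continuous g) (hgm : StrictMono g)
    (hg_range : Ioi 0 ⊆ range g) (hY : IsCompact Y) (hv : ContinuousOn v Y) (hμ : 0 < μ Y)
    {a : ℝ} (ha : 0 < a) : ∃! C, ∫ y in Y, g (C - v y) ∂μ = a := by
  have hvol : 0 < μ.real Y := ENNReal.toReal_pos hμ.ne' hY.measure_ne_top
  obtain ⟨r, hr⟩ := hg_range (div_pos ha hvol)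
  have hmass : μ.real Y * g r = a := by rw [hr]; field_simp
  obtain ⟨m, hm⟩ := hY.bddBelow_image hv
  obtain ⟨M, hM⟩ := hY.bddAbove_image hv
  obtain ⟨C, hC⟩ : a ∈ range fun C => ∫ y in Y, g (C - v y) ∂μ :=
    mem_range_of_exists_le_of_exists_ge (continuous_setIntegral_comp_sub hg hY hv)
      ⟨r + m, hmass ▸ setIntegral_comp_sub_le hg hgm.monotone hY hv
        (fun y hy => hm (mem_image_of_mem v hy)) r⟩
      ⟨r + M, hmass ▸ le_setIntegral_comp_sub hg hgm.monotone hY hv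
        (fun y hy => hM (mem_image_of_mem v hy)) r⟩
  exact ⟨C, hC, fun C' hC' =>
    (strictMono_setIntegral_comp_sub hg hgm hY hv hμ).injective (hC'.trans hC.symm)⟩

end Normalization

theorem stmt7_general (f fd : ℝ → ℝ)
    (hconv : StrictConvexOn ℝ (Set.Ici 0) f)
    (hderiv : ∀ x > (0:ℝ), HasDerivAt f (fd x) x)
    (hrange : ∀ r : ℝ, ∃ t > (0:ℝ), fd t = r)
    (Y : Set ℝ) (hYc : IsCompact Y) (hYm : 0 < volume Y)
    (v : ℝ → ℝ) (hv : ContinuousOn v Y) :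
    ∃ h : ℝ → ℝ → ℝ,
      (∀ C y, 0 < h C y ∧ fd (h C y) = C - v y) ∧
      (∀ C y t, 0 < t → fd t = C - v y → t = h C y) ∧
      (∀ C, ContinuousOn (h C) Y) ∧
      (∃! C : ℝ, ∫ y in Y, h C y = 1) := by
  have hmono : StrictMonoOn fd (Ioi 0) :=
    (hconv.subset Ioi_subset_Ici_self (convex_Ioi 0)).strictMonoOn_of_hasDerivAt hderiv
  obtain ⟨g, hg, hgm, hg_inv, hg_left⟩ :=
    hmono.exists_continuous_strictMono_inverse fun r _ => hrange r
  exact ⟨fun C y => g (C - v y), fun C y => hg_inv _,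
    fun C y t ht hfdt => (hg_left ht).symm.trans (congrArg g hfdt),
    fun C => hg.comp_continuousOn (continuousOn_const.sub hv),
    existsUnique_setIntegral_comp_sub_eq hg hgm (fun t ht => ⟨fd t, hg_left ht⟩) hYc hv hYm
      one_pos⟩

/-- Well-posedness of the normalization step in the congestion iterative scheme:
`y ↦ (f')⁻¹(C - v(y))` is well defined, positive and continuous, and there is a unique
constant `C` making it a probability density on `Y`. -/
theorem stmt7 (f fd : ℝ → ℝ)
    (hconv : StrictConvexOn ℝ (Set.Ici 0) f)
    (hderiv : ∀ x > (0:ℝ), HasDerivAt f (fd x) x)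
    (hfdcont : ContinuousOn fd (Set.Ioi 0))
    (hsuper : Tendsto (fun x => f x / x) atTop atTop)
    (hzero : Tendsto fd (𝓝[>] (0:ℝ)) atBot)
    (hrange : ∀ r : ℝ, ∃ t > (0:ℝ), fd t = r)
    (Y : Set ℝ) (hYc : IsCompact Y) (hYm : 0 < volume Y)
    (v : ℝ → ℝ) (hv : ContinuousOn v Y) :
    ∃ h : ℝ → ℝ → ℝ,
      (∀ C y, 0 < h C y ∧ fd (h C y) = C - v y) ∧
      (∀ C y t, 0 < t → fd t = C - v y → t = h C y) ∧
      (∀ C, ContinuousOn (h C) Y) ∧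
      (∃! C : ℝ, ∫ y in Y, h C y = 1) :=
  stmt7_general f fd hconv hderiv hrange Y hYc hYm v hv
end

section
/- Let $f : (0,\infty) \to \mathbb{R}$ be strictly convex and $C^1$ with $\lim_{t\to 0^+} f'(t) = -\infty$ and superlinear growth. Let $Y = (0,\bar y)$ and suppose $\nu$ is a probability density on $Y$ satisfying $v(y) + f'(\nu(y)) = C$ a.e. for a Lipschitz function $v$ with Lipschitz constant $L$ and constant $C$. Then there exist constants $M_1 \le M_2$ (depending only on $L$, $\bar y$, $f$) such that $(f')^{-1}(M_1) \le \nu(y) \le (f')^{-1}(M_2)$ for a.e. $y \in Y$; in particular $\nu$ is bounded above and below away from zero. -/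
open MeasureTheory Set Filter
open scoped ENNReal NNReal Topology

/-- Two-sided bounds for the equilibrium density in the congestion case: if
`v(y) + f'(ν(y)) = C` a.e. on `Y = (0, ȳ)` with `v` Lipschitz, then there are constants
`M₁ ≤ M₂` with `(f')⁻¹(M₁) ≤ ν ≤ (f')⁻¹(M₂)` a.e.; in particular `ν` is bounded above and
below away from zero. -/
theorem stmt17 (f fd : ℝ → ℝ)
    (hconv : StrictConvexOn ℝ (Set.Ioi 0) f)
    (hderiv : ∀ x > (0:ℝ), HasDerivAt f (fd x) x)
    (hfdcont : ContinuousOn fd (Set.Ioi 0))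
    (hzero : Tendsto fd (𝓝[>] (0:ℝ)) atBot)
    (hsuper : Tendsto (fun x => f x / x) atTop atTop)
    (ybar : ℝ) (hybar : 0 < ybar)
    (v : ℝ → ℝ) (L : ℝ≥0) (hv : LipschitzWith L v)
    (ν : ℝ → ℝ) (hν0 : ∀ y, 0 ≤ ν y)
    (hνint : ∫ y in Set.Ioo 0 ybar, ν y = 1)
    (C : ℝ)
    (hopt : ∀ᵐ y ∂volume.restrict (Set.Ioo 0 ybar), 0 < ν y ∧ v y + fd (ν y) = C) :
    ∃ M₁ M₂ t₁ t₂ : ℝ, M₁ ≤ M₂ ∧ 0 < t₁ ∧ t₁ ≤ t₂ ∧ fd t₁ = M₁ ∧ fd t₂ = M₂ ∧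
      ∀ᵐ y ∂volume.restrict (Set.Ioo 0 ybar), t₁ ≤ ν y ∧ ν y ≤ t₂ := by
  -- fd is strictly monotone on (0, ∞)
  have hfdmono : StrictMonoOn fd (Set.Ioi 0) := by
    have h := hconv.strictMonoOn_deriv (fun x hx => (hderiv x hx).differentiableAt)
    intro x hx y hy hxy
    have hx' : deriv f x = fd x := (hderiv x hx).deriv
    have hy' : deriv f y = fd y := (hderiv y hy).deriv
    rw [← hx', ← hy']
    exact h hx hy hxy
  set M₁ : ℝ := C - v 0 - L * ybar with hM₁
  set M₂ : ℝ := C - v 0 + L * ybar with hM₂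
  have hLy : (0:ℝ) ≤ L * ybar := mul_nonneg L.coe_nonneg hybar.le
  have hM12 : M₁ ≤ M₂ := by simp only [hM₁, hM₂]; linarith
  -- find a > 0 with fd a ≤ M₁
  obtain ⟨a, ha0, haM⟩ : ∃ a : ℝ, 0 < a ∧ fd a ≤ M₁ := by
    have h := (hzero.eventually (eventually_le_atBot M₁)).and self_mem_nhdsWithin
    obtain ⟨a, haM, ha0⟩ := h.exists
    exact ⟨a, ha0, haM⟩
  -- find b > a with M₂ ≤ fd b, using superlinearity
  obtain ⟨b, hab, hbM⟩ : ∃ b : ℝ, a < b ∧ M₂ ≤ fd b := by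
    set K : ℝ := max (M₂ + 1 + |M₂| * a) 1 with hK
    obtain ⟨B, hB⟩ := (hsuper.eventually (eventually_ge_atTop K)).exists_forall_of_atTop
    refine ⟨max (max (a + 1) (|f a| + 1)) B, ?_, ?_⟩
    · calc a < a + 1 := by linarith
        _ ≤ _ := le_trans (le_max_left _ _) (le_max_left _ _)
    set b : ℝ := max (max (a + 1) (|f a| + 1)) B with hbdef
    have hba : a < b := by
      calc a < a + 1 := by linarith
        _ ≤ _ := le_trans (le_max_left _ _) (le_max_left _ _)
    have hbfa : |f a| + 1 ≤ b := le_trans (le_max_right _ _) (le_max_left _ _)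
    have hb0 : 0 < b := lt_trans ha0 hba
    have hKb : K ≤ f b / b := hB b (le_max_right _ _)
    have hfb : K * b ≤ f b := by
      rw [le_div_iff₀ hb0] at hKb; linarith [hKb]
    -- slope from a to b
    have hslope : slope f a b < fd b :=
      hconv.slope_lt_of_hasDerivAt (Set.mem_Ioi.2 ha0) (Set.mem_Ioi.2 hb0) hba
        (hderiv b hb0)
    have hslope_ge : M₂ ≤ slope f a b := by
      rw [slope_def_field, le_div_iff₀ (by linarith : (0:ℝ) < b - a)]
      have hb1 : (1:ℝ) ≤ b := by linarith [abs_nonneg (f a)]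
      have hKge : M₂ + 1 + |M₂| * a ≤ K := le_max_left _ _
      have h2 : -M₂ ≤ |M₂| := neg_le_abs _
      have h3 : (0:ℝ) ≤ |M₂| := abs_nonneg _
      have hfa : f a ≤ |f a| := le_abs_self _
      nlinarith [mul_le_mul_of_nonneg_right hKge hb0.le,
        mul_nonneg (mul_nonneg h3 ha0.le) (by linarith : (0:ℝ) ≤ b - 1),
        mul_nonneg (add_nonneg h3 (by linarith : (0:ℝ) ≤ M₂ + |M₂|)) ha0.le]
    exact le_of_lt (lt_of_le_of_lt hslope_ge hslope)
  -- Intermediate value theorem on [a, b]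
  have hsub : Set.Icc a b ⊆ Set.Ioi 0 := fun x hx => lt_of_lt_of_le ha0 hx.1
  have hcont : ContinuousOn fd (Set.Icc a b) := hfdcont.mono hsub
  have hivt := intermediate_value_Icc hab.le hcont
  have ht1 : M₁ ∈ Set.Icc (fd a) (fd b) := ⟨haM, le_trans hM12 hbM⟩
  have ht2 : M₂ ∈ Set.Icc (fd a) (fd b) := ⟨le_trans haM hM12, hbM⟩
  obtain ⟨t₁, ht₁mem, ht₁⟩ := hivt ht1
  obtain ⟨t₂, ht₂mem, ht₂⟩ := hivt ht2
  have ht₁pos : 0 < t₁ := hsub ht₁mem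
  have ht₂pos : 0 < t₂ := hsub ht₂mem
  have ht12 : t₁ ≤ t₂ := by
    by_contra h
    push_neg at h
    have := hfdmono (Set.mem_Ioi.2 ht₂pos) (Set.mem_Ioi.2 ht₁pos) h
    rw [ht₁, ht₂] at this
    linarith
  refine ⟨M₁, M₂, t₁, t₂, hM12, ht₁pos, ht12, ht₁, ht₂, ?_⟩
  filter_upwards [hopt, ae_restrict_mem measurableSet_Ioo] with y ⟨hνy, hCy⟩ hy
  have hvy : |v y - v 0| ≤ L * ybar := by
    have := hv.dist_le_mul y 0
    rw [Real.dist_eq, Real.dist_eq, sub_zero] at this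
    refine le_trans this ?_
    have : |y| ≤ ybar := by
      rw [abs_of_pos hy.1]; exact hy.2.le
    exact mul_le_mul_of_nonneg_left this L.coe_nonneg
  have habs := abs_le.1 hvy
  have hfd_bounds : M₁ ≤ fd (ν y) ∧ fd (ν y) ≤ M₂ := by
    have : fd (ν y) = C - v y := by linarith
    rw [this]; constructor <;> [skip; skip] <;> simp only [hM₁, hM₂] <;> linarith
  constructor
  · by_contra h
    push_neg at h
    have := hfdmono (Set.mem_Ioi.2 hνy) (Set.mem_Ioi.2 ht₁pos) h
    rw [ht₁] at this
    linarith [hfd_bounds.1]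
  · by_contra h
    push_neg at h
    have := hfdmono (Set.mem_Ioi.2 ht₂pos) (Set.mem_Ioi.2 hνy) h
    rw [ht₂] at this
    linarith [hfd_bounds.2]
end
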